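/- arXiv:1807.03432 — 2 statements merged into one kernel-verified Lean document; each statement's English description precedes it below -/
import Mathlib

section
/- Let f : ℝ → ℝ and K ≥ 0 be such that the function x ↦ f(x) + K·x² is convex on ℝ (i.e., f is semiconvex with semiconvexity constant 2K). If f attains a local maximum at a point x₀ ∈ ℝ, then f is differentiable at x₀ and f'(x₀) = 0. -/
/-!
Adding `K x²` to `f` makes it convex, and a convex function on `ℝ` has one-sided derivatives
with left derivative ≤ right derivative; subtracting the smooth term `K x²` keeps both
properties for `f`. At a local maximum the right derivative is `≤ 0` and the left one `≥ 0`,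
so both vanish and `f` is differentiable with derivative `0`.
-/

open Set Filter Topology

section OneSided

variable {f : ℝ → ℝ} {a f' : ℝ}

lemma IsLocalMax.hasDerivWithinAt_Ioi_nonpos (h : IsLocalMax f a)
    (hf : HasDerivWithinAt f f' (Ioi a) a) : f' ≤ 0 := by
  rw [hasDerivWithinAt_iff_tendsto_slope' (by simp)] at hf
  refine le_of_tendsto hf ?_
  filter_upwards [nhdsWithin_le_nhds h, self_mem_nhdsWithin] with y hy hay
  exact (slope_nonpos_iff_of_le (le_of_lt hay)).2 hy

lemma IsLocalMax.hasDerivWithinAt_Iio_nonneg (h : IsLocalMax f a)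
    (hf : HasDerivWithinAt f f' (Iio a) a) : 0 ≤ f' := by
  rw [hasDerivWithinAt_iff_tendsto_slope' (by simp)] at hf
  refine ge_of_tendsto hf ?_
  filter_upwards [nhdsWithin_le_nhds h, self_mem_nhdsWithin] with y hy hya
  exact slope_comm f y a ▸ (slope_nonneg_iff_of_le (le_of_lt hya)).2 hy

lemma IsLocalMax.hasDerivAt_zero_of_leftDeriv_le_rightDeriv {l r : ℝ} (h : IsLocalMax f a)
    (hl : HasDerivWithinAt f l (Iio a) a) (hr : HasDerivWithinAt f r (Ioi a) a) (hlr : l ≤ r) :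
    HasDerivAt f 0 a := by
  have hl0 : l = 0 := le_antisymm (hlr.trans (h.hasDerivWithinAt_Ioi_nonpos hr))
    (h.hasDerivWithinAt_Iio_nonneg hl)
  have hr0 : r = 0 := le_antisymm (h.hasDerivWithinAt_Ioi_nonpos hr)
    (h.hasDerivWithinAt_Iio_nonneg hl |>.trans hlr)
  subst hl0 hr0
  have hunion := hl.Iic_of_Iio.union hr.Ici_of_Ioi
  rwa [Iic_union_Ici, hasDerivWithinAt_univ] at hunion

end OneSided

lemma ConvexOn.exists_leftDeriv_le_rightDeriv_of_add {f h : ℝ → ℝ} {s : Set ℝ} {x : ℝ}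
    (hconv : ConvexOn ℝ s (f + h)) (hx : x ∈ interior s) (hh : DifferentiableAt ℝ h x) :
    ∃ l r, l ≤ r ∧ HasDerivWithinAt f l (Iio x) x ∧ HasDerivWithinAt f r (Ioi x) x := by
  have hl := (hconv.hasDerivWithinAt_leftDeriv_of_mem_interior hx).sub
    hh.hasDerivAt.hasDerivWithinAt
  have hr := (hconv.hasDerivWithinAt_rightDeriv_of_mem_interior hx).sub
    hh.hasDerivAt.hasDerivWithinAt
  simp only [add_sub_cancel_right] at hl hr
  exact ⟨_, _, sub_le_sub_right (hconv.leftDeriv_le_rightDeriv_of_mem_interior hx) _, hl, hr⟩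

theorem semiconvex_isLocalMax_differentiableAt_deriv_eq_zero_general
    (f : ℝ → ℝ) (K : ℝ)
    (hconv : ConvexOn ℝ Set.univ (fun x : ℝ => f x + K * x ^ 2))
    (x₀ : ℝ) (hmax : IsLocalMax f x₀) :
    DifferentiableAt ℝ f x₀ ∧ deriv f x₀ = 0 := by
  obtain ⟨l, r, hlr, hl, hr⟩ := ConvexOn.exists_leftDeriv_le_rightDeriv_of_add
    (h := fun x => K * x ^ 2) (x := x₀) hconv (by simp) (by fun_prop)
  have hf := hmax.hasDerivAt_zero_of_leftDeriv_le_rightDeriv hl hr hlr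
  exact ⟨hf.differentiableAt, hf.deriv⟩

/-- If `f + K x²` is convex on `ℝ` (semiconvexity with constant `2K`, `K ≥ 0`) and `f`
attains a local maximum at `x₀`, then `f` is differentiable at `x₀` with `f'(x₀) = 0`. -/
theorem semiconvex_isLocalMax_differentiableAt_deriv_eq_zero
    (f : ℝ → ℝ) (K : ℝ) (hK : 0 ≤ K)
    (hconv : ConvexOn ℝ Set.univ (fun x : ℝ => f x + K * x ^ 2))
    (x₀ : ℝ) (hmax : IsLocalMax f x₀) :
    DifferentiableAt ℝ f x₀ ∧ deriv f x₀ = 0 :=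
  semiconvex_isLocalMax_differentiableAt_deriv_eq_zero_general f K hconv x₀ hmax
end

section
/- Let t > 0, let u₀ : ℝ → ℝ satisfy u₀(x) ≤ u₀(0) for all x ∈ ℝ, and let r : ℝ × [0,t] → ℝ be continuous with r(x,s) ≤ r(0,s) for all x ≤ 0 and all s ∈ [0,t]. Let γ : [0,t] → ℝ be Lipschitz continuous and set γ⁺(s) = max(γ(s), 0). Then γ⁺ is Lipschitz continuous and, denoting by γ' and (γ⁺)' the almost-everywhere defined derivatives of γ and γ⁺, one has u₀(γ⁺(0)) + ∫₀ᵗ ( −(γ⁺)'(s)²/4 + r(γ⁺(s), s) ) ds ≥ u₀(γ(0)) + ∫₀ᵗ ( −γ'(s)²/4 + r(γ(s), s) ) ds. -/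
/-!
The comparison of the integrands is pointwise: where `γ > 0` the two paths agree near `s`,
and where `γ ≤ 0` the truncated path sits at its minimum `0`, so its derivative vanishes and
its reward `r 0 s` is the larger one.
-/

open MeasureTheory Set intervalIntegral

section PosPart

variable {γ : ℝ → ℝ} {s : ℝ}

theorem deriv_max_zero_of_nonpos (h : γ s ≤ 0) : deriv (fun x => max (γ x) 0) s = 0 :=
  IsLocalMin.deriv_eq_zero <| Filter.Eventually.of_forall fun y => by
    simp only [max_eq_right h, le_max_right]

theorem deriv_max_zero_of_pos (hγ : ContinuousAt γ s) (h : 0 < γ s) :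
    deriv (fun x => max (γ x) 0) s = deriv γ s := by
  refine Filter.EventuallyEq.deriv_eq ?_
  filter_upwards [hγ.eventually (eventually_gt_nhds h)] with y hy
  exact max_eq_left hy.le

end PosPart

theorem LipschitzWith.intervalIntegrable_deriv_sq {f : ℝ → ℝ} {L : NNReal}
    (hf : LipschitzWith L f) (a b : ℝ) :
    IntervalIntegrable (fun s => deriv f s ^ 2) volume a b := by
  refine intervalIntegrable_iff.2 <|
    IntegrableOn.of_bound measure_Ioc_lt_top
      ((measurable_deriv f).pow_const 2).aestronglyMeasurable ((L : ℝ) ^ 2) ?_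
  refine Filter.Eventually.of_forall fun s => ?_
  rw [Real.norm_eq_abs, abs_pow]
  exact pow_le_pow_left₀ (abs_nonneg _) (norm_deriv_le_of_lipschitz hf) 2

noncomputable def lagrangian (r : ℝ → ℝ → ℝ) (γ : ℝ → ℝ) (s : ℝ) : ℝ :=
  -(deriv γ s) ^ 2 / 4 + r (γ s) s

theorem LipschitzWith.intervalIntegrable_lagrangian {r : ℝ → ℝ → ℝ} {γ : ℝ → ℝ} {L : NNReal}
    {a b : ℝ} (hr : ContinuousOn (fun p : ℝ × ℝ => r p.1 p.2) (univ ×ˢ uIcc a b))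
    (hγ : LipschitzWith L γ) : IntervalIntegrable (lagrangian r γ) volume a b :=
  ((hγ.intervalIntegrable_deriv_sq a b).neg.div_const 4).add <| ContinuousOn.intervalIntegrable <|
    hr.comp (hγ.continuous.continuousOn.prodMk continuousOn_id) fun _ hs => ⟨mem_univ _, hs⟩

theorem lagrangian_le_lagrangian_max_zero {r : ℝ → ℝ → ℝ} {γ : ℝ → ℝ} {s : ℝ}
    (hr : ∀ x ≤ 0, r x s ≤ r 0 s) (hγ : ContinuousAt γ s) :
    lagrangian r γ s ≤ lagrangian r (fun x => max (γ x) 0) s := by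
  simp only [lagrangian]
  rcases le_or_gt (γ s) 0 with h | h
  · rw [deriv_max_zero_of_nonpos h, max_eq_right h]
    linarith [hr (γ s) h, sq_nonneg (deriv γ s)]
  · rw [deriv_max_zero_of_pos hγ h, max_eq_left h.le]

/-- Truncating a Lipschitz path to its positive part does not decrease the action
`F(γ) = u₀(γ(0)) + ∫₀ᵗ ( -γ'(s)²/4 + r(γ(s),s) ) ds`, provided `u₀` is maximized at `0`
and `r(x,s) ≤ r(0,s)` for `x ≤ 0`. -/
theorem action_posPart_ge
    (t : ℝ) (ht : 0 < t)
    (u₀ : ℝ → ℝ) (hu₀ : ∀ x : ℝ, u₀ x ≤ u₀ 0)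
    (r : ℝ → ℝ → ℝ)
    (hr : ContinuousOn (fun p : ℝ × ℝ => r p.1 p.2) (Set.univ ×ˢ Set.Icc 0 t))
    (hrmax : ∀ x : ℝ, x ≤ 0 → ∀ s ∈ Set.Icc 0 t, r x s ≤ r 0 s)
    (γ : ℝ → ℝ) (L : NNReal) (hγ : LipschitzWith L γ) :
    LipschitzWith L (fun s : ℝ => max (γ s) 0) ∧
      u₀ (max (γ 0) 0) +
          ∫ s in (0:ℝ)..t, (-(deriv (fun x : ℝ => max (γ x) 0) s) ^ 2 / 4
            + r (max (γ s) 0) s) ≥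
        u₀ (γ 0) + ∫ s in (0:ℝ)..t, (-(deriv γ s) ^ 2 / 4 + r (γ s) s) := by
  have hγpos := hγ.max_const 0
  have hu : u₀ (γ 0) ≤ u₀ (max (γ 0) 0) := by
    rcases le_total (γ 0) 0 with h | h
    · rw [max_eq_right h]; exact hu₀ _
    · rw [max_eq_left h]
  rw [← uIcc_of_le ht.le] at hr
  have hint : ∫ s in (0:ℝ)..t, lagrangian r γ s ≤
      ∫ s in (0:ℝ)..t, lagrangian r (fun x => max (γ x) 0) s :=
    integral_mono_on ht.le (hγ.intervalIntegrable_lagrangian hr)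
      (hγpos.intervalIntegrable_lagrangian hr) fun s hs =>
        lagrangian_le_lagrangian_max_zero (hrmax · · s hs) hγ.continuous.continuousAt
  exact ⟨hγpos, by unfold lagrangian at hint; linarith⟩
end
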